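/- For the polynomial W = x²y + xz⁴ + y²z (the singularity S_{16}), the maximal diagonal symmetry group is cyclic of order 17, generated by the exponential of the weight vector, J = (e^{2πi·5/17}, e^{2πi·7/17}, e^{2πi·3/17}). That is, a triple (λ,μ,ν) of complex numbers satisfies W(λx, μy, νz) = W(x,y,z) — equivalently λ²μ = 1, λν⁴ = 1 and μ²ν = 1 — if and only if (λ,μ,ν) = (e^{2πi·5m/17}, e^{2πi·7m/17}, e^{2πi·3m/17}) for some integer m, and the group of such triples has exactly 17 elements. In particular the maximal symmetry group equals its minimal admissible subgroup ⟨J⟩. -/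

import Mathlib

open MvPolynomial

/-- The polynomial x²y + xz⁴ + y²z (the singularity S_{16}). -/
noncomputable def W16 : MvPolynomial (Fin 3) ℂ := MvPolynomial.X 0 ^ 2 * MvPolynomial.X 1 + MvPolynomial.X 0 * MvPolynomial.X 2 ^ 4 + MvPolynomial.X 1 ^ 2 * MvPolynomial.X 2

/-- A diagonal rescaling `x ↦ λx, y ↦ μy, z ↦ νz` fixes `W16`. -/
def IsDiagSym16 (lam mu nu : ℂ) : Prop :=
  MvPolynomial.aeval (fun j => MvPolynomial.C (![lam, mu, nu] j) * MvPolynomial.X j) W16 = W16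

lemma sym_iff_16 (lam mu nu : ℂ) :
    IsDiagSym16 lam mu nu ↔ (lam ^ 2 * mu = 1 ∧ lam * nu ^ 4 = 1 ∧ mu ^ 2 * nu = 1) := by
  constructor
  · intro h
    refine ⟨?_, ?_, ?_⟩
    · have := congrArg (eval ![1,1,0]) h
      simpa [IsDiagSym16, W16] using this
    · have := congrArg (eval ![1,0,1]) h
      simpa [IsDiagSym16, W16] using this
    · have := congrArg (eval ![0,1,1]) h
      simpa [IsDiagSym16, W16] using this
  · rintro ⟨h1, h2, h3⟩
    unfold IsDiagSym16 W16
    simp only [map_add, map_mul, map_pow, aeval_X, Matrix.cons_val_zero, Matrix.cons_val_one,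
      Matrix.head_cons, Matrix.cons_val_two, Matrix.tail_cons]
    have e1 : (C lam : MvPolynomial (Fin 3) ℂ)^2 * C mu = 1 := by
      rw [← map_pow, ← map_mul, h1, map_one]
    have e2 : (C lam : MvPolynomial (Fin 3) ℂ) * C nu ^ 4 = 1 := by
      rw [← map_pow, ← map_mul, h2, map_one]
    have e3 : (C mu : MvPolynomial (Fin 3) ℂ)^2 * C nu = 1 := by
      rw [← map_pow, ← map_mul, h3, map_one]
    linear_combination (X 0^2*X 1 : MvPolynomial (Fin 3) ℂ) * e1 + (X 0 * X 2^4) * e2 + (X 1^2 * X 2) * e3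

lemma alg_consequences_16 {lam mu nu : ℂ} (h1 : lam ^ 2 * mu = 1) (h2 : lam * nu ^ 4 = 1)
    (h3 : mu ^ 2 * nu = 1) : lam ^ 17 = 1 ∧ mu = lam ^ 15 ∧ nu = lam ^ 4 := by
  have h4 : nu = lam ^ 4 := by linear_combination lam^4 * h3 - nu * ((lam^2*mu + 1) * h1)
  rw [h4] at h2
  have h17 : lam ^ 17 = 1 := by linear_combination h2
  exact ⟨h17, by linear_combination lam^15 * h1 - mu * h17, h4⟩

lemma exp_char_16 (lam mu nu : ℂ) :
    (lam ^ 2 * mu = 1 ∧ lam * nu ^ 4 = 1 ∧ mu ^ 2 * nu = 1)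
    ↔ ∃ m : ℤ, lam = Complex.exp (2 * (Real.pi : ℂ) * Complex.I * (5 * (m : ℂ) / 17))
        ∧ mu = Complex.exp (2 * (Real.pi : ℂ) * Complex.I * (7 * (m : ℂ) / 17))
        ∧ nu = Complex.exp (2 * (Real.pi : ℂ) * Complex.I * (3 * (m : ℂ) / 17)) := by
  constructor
  · rintro ⟨h1, h2, h3⟩
    obtain ⟨h17, hmu, hnu⟩ := alg_consequences_16 h1 h2 h3
    have hl : lam ≠ 0 := by
      intro h; rw [h] at h1; simp at h1
    have ht : Complex.exp (Complex.log lam) = lam := Complex.exp_log hl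
    have h17' : Complex.exp ((17 : ℕ) * Complex.log lam) = 1 := by
      rw [Complex.exp_nat_mul, ht]; exact_mod_cast h17
    obtain ⟨n, hn⟩ := Complex.exp_eq_one_iff.mp h17'
    have htv : Complex.log lam = (n : ℂ) * (2 * (Real.pi:ℂ) * Complex.I) / 17 := by
      field_simp at hn ⊢
      linear_combination hn
    refine ⟨7 * n, ?_, ?_, ?_⟩
    · rw [← ht]
      rw [Complex.exp_eq_exp_iff_exists_int]
      exact ⟨-2 * n, by rw [htv]; push_cast; field_simp; ring⟩
    · rw [hmu, ← ht, ← Complex.exp_nat_mul, Complex.exp_eq_exp_iff_exists_int]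
      exact ⟨-2 * n, by rw [htv]; push_cast; field_simp; ring⟩
    · rw [hnu, ← ht, ← Complex.exp_nat_mul, Complex.exp_eq_exp_iff_exists_int]
      exact ⟨-n, by rw [htv]; push_cast; field_simp; ring⟩
  · rintro ⟨m, hl, hm, hn⟩
    subst hl hm hn
    refine ⟨?_, ?_, ?_⟩ <;>
    · rw [← Complex.exp_nat_mul, ← Complex.exp_add, Complex.exp_eq_one_iff]
      exact ⟨m, by push_cast; field_simp; ring⟩

noncomputable def symEquivRoots16 :
    {p : ℂ × ℂ × ℂ // IsDiagSym16 p.1 p.2.1 p.2.2} ≃ (Polynomial.nthRootsFinset 17 (1 : ℂ)) where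
  toFun p := ⟨p.1.1, by
    obtain ⟨h1, h2, h3⟩ := (sym_iff_16 _ _ _).mp p.2
    exact (Polynomial.mem_nthRootsFinset (by norm_num) _).mpr (alg_consequences_16 h1 h2 h3).1⟩
  invFun x := ⟨(x.1, x.1 ^ 15, x.1 ^ 4), by
    have hx : x.1 ^ 17 = 1 := (Polynomial.mem_nthRootsFinset (by norm_num) _).mp x.2
    refine (sym_iff_16 _ _ _).mpr ⟨by linear_combination hx, by linear_combination hx,
      by linear_combination (x.1 ^ 17 + 1) * hx⟩⟩
  left_inv p := by
    obtain ⟨h1, h2, h3⟩ := (sym_iff_16 _ _ _).mp p.2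
    obtain ⟨h17, hmu, hnu⟩ := alg_consequences_16 h1 h2 h3
    ext <;> simp [hmu, hnu]
  right_inv x := by ext; rfl

/-- For `W = x²y + xz⁴ + y²z` (S_{16}), the maximal diagonal symmetry group is cyclic of order 17, generated by `J = (e^{2πi·5/17}, e^{2πi·7/17}, e^{2πi·3/17})`; in particular `G_W^max = ⟨J⟩`. -/
theorem max_symmetry_group_16 :
    (∀ lam mu nu : ℂ, IsDiagSym16 lam mu nu ↔ (lam ^ 2 * mu = 1 ∧ lam * nu ^ 4 = 1 ∧ mu ^ 2 * nu = 1))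
    ∧ (∀ lam mu nu : ℂ, IsDiagSym16 lam mu nu
        ↔ ∃ m : ℤ, lam = Complex.exp (2 * (Real.pi : ℂ) * Complex.I * (5 * (m : ℂ) / 17))
            ∧ mu = Complex.exp (2 * (Real.pi : ℂ) * Complex.I * (7 * (m : ℂ) / 17))
            ∧ nu = Complex.exp (2 * (Real.pi : ℂ) * Complex.I * (3 * (m : ℂ) / 17)))
    ∧ Nat.card {p : ℂ × ℂ × ℂ // IsDiagSym16 p.1 p.2.1 p.2.2} = 17 := by
  refine ⟨sym_iff_16, fun lam mu nu => (sym_iff_16 lam mu nu).trans (exp_char_16 lam mu nu), ?_⟩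
  rw [Nat.card_congr symEquivRoots16, Nat.card_eq_finsetCard]
  exact (Complex.isPrimitiveRoot_exp 17 (by norm_num)).card_nthRootsFinset
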